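/- Let G = (S, s0, 𝔸, κ, L) be a CGS, ṡ ∈ S, φ' a HyperATL*_S state formula with free path variables V ∪ {π}, A ⊆ Agts, and ξ a sharing constraint with ξ ⊆ (A×A) ∪ (Ā×Ā). If D is a DPA over alphabet (V ∪ {π}) → S that is (G, ṡ)-equivalent to φ', then the APA A^× obtained from the product construction for the existential quantifier ⟪A⟫_ξ π is (G, ṡ)-equivalent to ⟪A⟫_ξ π. φ'; that is, for every path assignment Π : V → S^ω, zip(Π) ∈ L(A^×) if and only if ṡ, Π ⊨_G ⟪A⟫_ξ π. φ'. -/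

import Mathlib

/-!
A run tree of the product automaton on `zip(Π)` is a strategy tree for the coalition `A`: at a
node labelled `(q, s)` the disjunction over the action vectors of `A` is the coalition's move,
the conjunction over the action vectors of `Aᶜ` branches over the opponents' replies, and the
labels follow the current state of the play together with the state of `D` on `zip(Π)`
extended by that play. An accepting run tree therefore yields a strategy of `A` all of whose
plays make `D` accept, and conversely a strategy all of whose plays are accepted by `D` unfolds
into an accepting run tree. The `(G, ṡ)`-equivalence of `D` translates acceptance of a play into
satisfaction of `φ'`, which is the semantics of `⟪A⟫_ξ π. φ'`.
-/

namespace HyperATLS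

attribute [local instance] Classical.propDecidable

set_option linter.unusedVariables false

/-! ### Concurrent game structures, strategies, plays -/

/-- Nonempty finite sequences over `S`. -/
abbrev NEList (S : Type) : Type := {l : List S // l ≠ []}

/-- A concurrent game structure with agents `Agt`, atomic propositions `AP`,
states `S` and actions `Act`. -/
structure CGS (Agt AP S Act : Type) where
  init : S
  trans : S → (Agt → Act) → S
  label : S → Set AP

/-- A strategy maps nonempty finite sequences of states to actions. -/
abbrev Strategy (S Act : Type) : Type := NEList S → Act

variable {Agt AP S Act Var : Type}

/-- The history `[p 0, …, p k]` of the play from `s` under the strategy vector `F`. -/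
def CGS.hist (G : CGS Agt AP S Act) (s : S) (F : Agt → Strategy S Act) : ℕ → NEList S
  | 0 => ⟨[s], by simp⟩
  | k + 1 =>
    let h := G.hist s F k
    ⟨h.1 ++ [G.trans (h.1.getLast h.2) fun i => F i h], by simp⟩

/-- `Play_G(s, F)`, the `k`-th state of the unique play from `s` under `F`. -/
def CGS.play (G : CGS Agt AP S Act) (s : S) (F : Agt → Strategy S Act) (k : ℕ) : S :=
  (G.hist s F k).1.getLast (G.hist s F k).2

/-- Combine a strategy vector for `A` with one for the complement `Aᶜ`:  `F ⊕ F'`. -/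
noncomputable def combine (A : Set Agt) (F : ↥A → Strategy S Act)
    (F' : ↥(Aᶜ) → Strategy S Act) : Agt → Strategy S Act := fun i =>
  if h : i ∈ A then F ⟨i, h⟩ else F' ⟨i, h⟩

/-- `shr_G(A, ξ)`: strategy vectors for `A` in which agents related by `ξ` share strategies. -/
def shr (A : Set Agt) (ξ : Set (Agt × Agt)) : Set (↥A → Strategy S Act) :=
  {F | ∀ i j : ↥A, ((i : Agt), (j : Agt)) ∈ ξ → F i = F j}

/-! ### HyperATL*_S syntax -/

mutual
/-- HyperATL*_S path formulas. -/
inductive HPath (Agt AP Var : Type) : Type where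
  | atom : AP → Var → HPath Agt AP Var
  | conj : HPath Agt AP Var → HPath Agt AP Var → HPath Agt AP Var
  | neg : HPath Agt AP Var → HPath Agt AP Var
  | next : HPath Agt AP Var → HPath Agt AP Var
  | untl : HPath Agt AP Var → HPath Agt AP Var → HPath Agt AP Var
  | state : HState Agt AP Var → Var → HPath Agt AP Var

/-- HyperATL*_S state formulas. -/
inductive HState (Agt AP Var : Type) : Type where
  | ex : Set Agt → Set (Agt × Agt) → Var → HState Agt AP Var → HState Agt AP Var
  | all : Set Agt → Set (Agt × Agt) → Var → HState Agt AP Var → HState Agt AP Var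
  | path : HPath Agt AP Var → HState Agt AP Var
end

/-- Partial path assignments: `Π : V ⇀ S^ω`. -/
abbrev PathAssign (Var S : Type) : Type := Var → Option (ℕ → S)

/-- `Π[k,∞]`: shift every assigned path by `k`. -/
def shiftPA (Pa : PathAssign Var S) (k : ℕ) : PathAssign Var S :=
  fun v => (Pa v).map fun p n => p (n + k)

/-! ### HyperATL*_S semantics -/

mutual
/-- `Π ⊨_G ψ` for path formulas. -/
def HPath.sat (G : CGS Agt AP S Act) (Pa : PathAssign Var S) :
    HPath Agt AP Var → Prop
  | .atom a π => ∃ p, Pa π = some p ∧ a ∈ G.label (p 0)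
  | .conj ψ₁ ψ₂ => HPath.sat G Pa ψ₁ ∧ HPath.sat G Pa ψ₂
  | .neg ψ => ¬ HPath.sat G Pa ψ
  | .next ψ => HPath.sat G (shiftPA Pa 1) ψ
  | .untl ψ₁ ψ₂ => ∃ k, HPath.sat G (shiftPA Pa k) ψ₂ ∧
      ∀ m, m < k → HPath.sat G (shiftPA Pa m) ψ₁
  | .state φ π => ∃ p, Pa π = some p ∧ HState.sat G (p 0) (fun _ => none) φ

/-- `s, Π ⊨_G φ` for state formulas. -/
def HState.sat (G : CGS Agt AP S Act) (s : S) (Pa : PathAssign Var S) :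
    HState Agt AP Var → Prop
  | .ex A ξ π φ => ∃ F : ↥A → Strategy S Act, F ∈ shr A ξ ∧
      ∀ F' : ↥(Aᶜ) → Strategy S Act, F' ∈ shr (Aᶜ) ξ →
        HState.sat G s (Function.update Pa π (some (G.play s (combine A F F')))) φ
  | .all A ξ π φ => ∀ F : ↥A → Strategy S Act, F ∈ shr A ξ →
      ∃ F' : ↥(Aᶜ) → Strategy S Act, F' ∈ shr (Aᶜ) ξ ∧
        HState.sat G s (Function.update Pa π (some (G.play s (combine A F F')))) φ
  | .path ψ => HPath.sat G Pa ψ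
end

/-- `G ⊨ φ`. -/
def CGS.models (G : CGS Agt AP S Act) (φ : HState Agt AP Var) : Prop :=
  HState.sat G G.init (fun _ => none) φ

/-! ### Closedness, free variables, atomic propositions, substitution -/

mutual
/-- Well-formedness of a path formula w.r.t. a set `B` of bound path variables:
every indexed atom lies under a binding quantifier and nested state formulas are closed. -/
def HPath.wf (B : Set Var) : HPath Agt AP Var → Prop
  | .atom _ π => π ∈ B
  | .conj ψ₁ ψ₂ => HPath.wf B ψ₁ ∧ HPath.wf B ψ₂
  | .neg ψ => HPath.wf B ψ
  | .next ψ => HPath.wf B ψ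
  | .untl ψ₁ ψ₂ => HPath.wf B ψ₁ ∧ HPath.wf B ψ₂
  | .state φ π => π ∈ B ∧ HState.wf (∅ : Set Var) φ

/-- Well-formedness of a state formula w.r.t. a set `B` of bound path variables. -/
def HState.wf (B : Set Var) : HState Agt AP Var → Prop
  | .ex _ _ π φ => HState.wf (insert π B) φ
  | .all _ _ π φ => HState.wf (insert π B) φ
  | .path ψ => HPath.wf B ψ
end

/-- A state formula is closed if all its indexed atoms are bound. -/
def HState.Closed (φ : HState Agt AP Var) : Prop := HState.wf (∅ : Set Var) φ

mutual
/-- Free path variables of a path formula. -/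
def HPath.freeP : HPath Agt AP Var → Set Var
  | .atom _ π => {π}
  | .conj ψ₁ ψ₂ => HPath.freeP ψ₁ ∪ HPath.freeP ψ₂
  | .neg ψ => HPath.freeP ψ
  | .next ψ => HPath.freeP ψ
  | .untl ψ₁ ψ₂ => HPath.freeP ψ₁ ∪ HPath.freeP ψ₂
  | .state φ π => insert π (HState.freeS φ)

/-- Free path variables of a state formula. -/
def HState.freeS : HState Agt AP Var → Set Var
  | .ex _ _ π φ => HState.freeS φ \ {π}
  | .all _ _ π φ => HState.freeS φ \ {π}
  | .path ψ => HPath.freeP ψ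
end

mutual
/-- Atomic propositions occurring in a path formula. -/
def HPath.apsP : HPath Agt AP Var → Set AP
  | .atom a _ => {a}
  | .conj ψ₁ ψ₂ => HPath.apsP ψ₁ ∪ HPath.apsP ψ₂
  | .neg ψ => HPath.apsP ψ
  | .next ψ => HPath.apsP ψ
  | .untl ψ₁ ψ₂ => HPath.apsP ψ₁ ∪ HPath.apsP ψ₂
  | .state φ _ => HState.apsS φ

/-- Atomic propositions occurring in a state formula. -/
def HState.apsS : HState Agt AP Var → Set AP
  | .ex _ _ _ φ => HState.apsS φ
  | .all _ _ _ φ => HState.apsS φ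
  | .path ψ => HPath.apsP ψ
end

mutual
/-- Replace every occurrence of the nested state-formula atom `φ'_ρ` by the
indexed atomic proposition `p_ρ`. -/
noncomputable def HPath.substN (φ' : HState Agt AP Var) (p : AP) :
    HPath Agt AP Var → HPath Agt AP Var
  | .atom a π => .atom a π
  | .conj ψ₁ ψ₂ => .conj (HPath.substN φ' p ψ₁) (HPath.substN φ' p ψ₂)
  | .neg ψ => .neg (HPath.substN φ' p ψ)
  | .next ψ => .next (HPath.substN φ' p ψ)
  | .untl ψ₁ ψ₂ => .untl (HPath.substN φ' p ψ₁) (HPath.substN φ' p ψ₂)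
  | .state φ π => if φ = φ' then .atom p π else .state (HState.substN φ' p φ) π

/-- Substitution on state formulas. -/
noncomputable def HState.substN (φ' : HState Agt AP Var) (p : AP) :
    HState Agt AP Var → HState Agt AP Var
  | .ex A ξ π φ => .ex A ξ π (HState.substN φ' p φ)
  | .all A ξ π φ => .all A ξ π (HState.substN φ' p φ)
  | .path ψ => .path (HPath.substN φ' p ψ)
end

/-- A path formula contains no nested state formulas. -/
def HPath.noState : HPath Agt AP Var → Prop
  | .atom _ _ => True
  | .conj ψ₁ ψ₂ => HPath.noState ψ₁ ∧ HPath.noState ψ₂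
  | .neg ψ => HPath.noState ψ
  | .next ψ => HPath.noState ψ
  | .untl ψ₁ ψ₂ => HPath.noState ψ₁ ∧ HPath.noState ψ₂
  | .state _ _ => False

/-- A state formula of the form `⟨A₁⟩_{ξ₁} π₁ … ⟨Aₙ⟩_{ξₙ} πₙ. ψ` where the path formula `ψ`
contains no nested state formulas. -/
def HState.prefixForm : HState Agt AP Var → Prop
  | .ex _ _ _ φ => HState.prefixForm φ
  | .all _ _ _ φ => HState.prefixForm φ
  | .path ψ => HPath.noState ψ

/-! ### ATL* -/

mutual
/-- ATL* path formulas. -/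
inductive APath (Agt AP : Type) : Type where
  | atom : AP → APath Agt AP
  | conj : APath Agt AP → APath Agt AP → APath Agt AP
  | neg : APath Agt AP → APath Agt AP
  | next : APath Agt AP → APath Agt AP
  | untl : APath Agt AP → APath Agt AP → APath Agt AP
  | state : AState Agt AP → APath Agt AP

/-- ATL* state formulas. -/
inductive AState (Agt AP : Type) : Type where
  | ex : Set Agt → APath Agt AP → AState Agt AP
  | all : Set Agt → APath Agt AP → AState Agt AP
end

mutual
/-- `p ⊨_G ψ` for ATL* path formulas. -/
def APath.sat (G : CGS Agt AP S Act) (p : ℕ → S) : APath Agt AP → Prop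
  | .atom a => a ∈ G.label (p 0)
  | .conj ψ₁ ψ₂ => APath.sat G p ψ₁ ∧ APath.sat G p ψ₂
  | .neg ψ => ¬ APath.sat G p ψ
  | .next ψ => APath.sat G (fun n => p (n + 1)) ψ
  | .untl ψ₁ ψ₂ => ∃ k, APath.sat G (fun n => p (n + k)) ψ₂ ∧
      ∀ m, m < k → APath.sat G (fun n => p (n + m)) ψ₁
  | .state φ => AState.sat G (p 0) φ

/-- `s ⊨_G φ` for ATL* state formulas. -/
def AState.sat (G : CGS Agt AP S Act) (s : S) : AState Agt AP → Prop
  | .ex A ψ => ∃ F : ↥A → Strategy S Act, ∀ F' : ↥(Aᶜ) → Strategy S Act,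
      APath.sat G (G.play s (combine A F F')) ψ
  | .all A ψ => ∀ F : ↥A → Strategy S Act, ∃ F' : ↥(Aᶜ) → Strategy S Act,
      APath.sat G (G.play s (combine A F F')) ψ
end

/-- `G ⊨_ATL* φ`. -/
def CGS.modelsATL (G : CGS Agt AP S Act) (φ : AState Agt AP) : Prop :=
  AState.sat G G.init φ

mutual
/-- The translation `[·]` from ATL* path formulas to HyperATL*_S path formulas,
using the single fixed path variable `()`. -/
def APath.toHyper : APath Agt AP → HPath Agt AP Unit
  | .atom a => .atom a ()
  | .conj ψ₁ ψ₂ => .conj (APath.toHyper ψ₁) (APath.toHyper ψ₂)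
  | .neg ψ => .neg (APath.toHyper ψ)
  | .next ψ => .next (APath.toHyper ψ)
  | .untl ψ₁ ψ₂ => .untl (APath.toHyper ψ₁) (APath.toHyper ψ₂)
  | .state φ => .state (AState.toHyper φ) ()

/-- The translation `[·]` from ATL* state formulas to HyperATL*_S state formulas:
each quantifier binds the fixed path variable `()` with the empty sharing constraint. -/
def AState.toHyper : AState Agt AP → HState Agt AP Unit
  | .ex A ψ => .ex A ∅ () (.path (APath.toHyper ψ))
  | .all A ψ => .all A ∅ () (.path (APath.toHyper ψ))
end
/-! ### Alternating parity automata -/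

/-- Positive Boolean formulas over `Q`. -/
inductive PosBool (Q : Type) : Type where
  | var : Q → PosBool Q
  | conj : PosBool Q → PosBool Q → PosBool Q
  | disj : PosBool Q → PosBool Q → PosBool Q

/-- Satisfaction of a positive Boolean formula by a set of states. -/
def PosBool.Sat {Q : Type} (X : Set Q) : PosBool Q → Prop
  | .var q => q ∈ X
  | .conj θ₁ θ₂ => PosBool.Sat X θ₁ ∧ PosBool.Sat X θ₂
  | .disj θ₁ θ₂ => PosBool.Sat X θ₁ ∨ PosBool.Sat X θ₂

/-- An alternating parity automaton with states `Q` over alphabet `Alph`. -/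
structure APA (Q Alph : Type) where
  init : Q
  δ : Q → Alph → PosBool Q
  color : Q → ℕ

/-- The minimal color occurring infinitely often in `col` is even. -/
def ParityAccept (col : ℕ → ℕ) : Prop :=
  ∃ c, Even c ∧ {k | col k = c}.Infinite ∧ ∀ c', c' < c → {k | col k = c'}.Finite

/-- A run tree of an APA `A` on the word `u`: a set `T ⊆ ℕ*` of nodes containing the
root `ε`, labeled by states such that the root is labeled by the initial state and, for
every node `τ ∈ T`, the set of labels of its children satisfies `δ(ℓ(τ), u(|τ|))`. -/
structure RunTree {Q Alph : Type} (A : APA Q Alph) (u : ℕ → Alph) where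
  T : Set (List ℕ)
  label : List ℕ → Q
  root_mem : ([] : List ℕ) ∈ T
  root_label : label [] = A.init
  consistent : ∀ τ ∈ T,
    PosBool.Sat {q | ∃ n : ℕ, τ ++ [n] ∈ T ∧ label (τ ++ [n]) = q}
      (A.δ (label τ) (u τ.length))

/-- The node at depth `k` along the infinite branch `b`. -/
def branchNode (b : ℕ → ℕ) (k : ℕ) : List ℕ := (List.range k).map b

/-- A run tree is accepting if on every infinite branch the minimal color occurring
infinitely often is even. -/
def RunTree.Accepting {Q Alph : Type} {A : APA Q Alph} {u : ℕ → Alph}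
    (rt : RunTree A u) : Prop :=
  ∀ b : ℕ → ℕ, (∀ k, branchNode b k ∈ rt.T) →
    ParityAccept fun k => A.color (rt.label (branchNode b k))

/-- The language of an APA. -/
def APA.Lang {Q Alph : Type} (A : APA Q Alph) : Set (ℕ → Alph) :=
  {u | ∃ rt : RunTree A u, rt.Accepting}

/-- A deterministic parity automaton. -/
structure DPA (Q Alph : Type) where
  init : Q
  δ : Q → Alph → Q
  color : Q → ℕ

/-- The unique run of a DPA on a word. -/
def DPA.run {Q Alph : Type} (D : DPA Q Alph) (u : ℕ → Alph) : ℕ → Q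
  | 0 => D.init
  | k + 1 => D.δ (DPA.run D u k) (u k)

/-- The language of a DPA. -/
def DPA.Lang {Q Alph : Type} (D : DPA Q Alph) : Set (ℕ → Alph) :=
  {u | ParityAccept fun k => D.color (D.run u k)}

/-- A DPA viewed as an APA. -/
def DPA.toAPA {Q Alph : Type} (D : DPA Q Alph) : APA Q Alph where
  init := D.init
  δ := fun q l => .var (D.δ q l)
  color := D.color

/-! ### Zipping, `(G, sDot)`-equivalence and the product construction -/

/-- `zip(Π)`: zip a path assignment into an infinite word. -/
def zipAssign {V S : Type} (Pa : V → ℕ → S) : ℕ → (V → S) := fun k v => Pa v k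

/-- View a total assignment on a set `V` of path variables as a partial path assignment. -/
noncomputable def toAssign (V : Set Var) (Pa : ↥V → ℕ → S) : PathAssign Var S :=
  fun v => if h : v ∈ V then some (Pa ⟨v, h⟩) else none

/-- An automaton over the alphabet `↥V → S` is `(G, sDot)`-equivalent to a HyperATL*_S state
formula `φ` with free path variables `V` iff for every path assignment `Π : V → S^ω`:
`zip(Π) ∈ L(A)` if and only if `sDot, Π ⊨_G φ`. -/
def APAEquiv {Q : Type} (G : CGS Agt AP S Act) (sDot : S) (V : Set Var)
    (A : APA Q (↥V → S)) (φ : HState Agt AP Var) : Prop :=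
  ∀ Pa : ↥V → ℕ → S, zipAssign Pa ∈ A.Lang ↔ HState.sat G sDot (toAssign V Pa) φ

/-- Finitary disjunction (over a finite nonempty index type). -/
noncomputable def PosBool.iOr {ι Q : Type} [Finite ι] [Nonempty ι]
    (f : ι → PosBool Q) : PosBool Q :=
  letI : Fintype ι := Fintype.ofFinite ι
  (Finset.univ.toList.map f).foldl .disj (f (Classical.arbitrary ι))

/-- Finitary conjunction (over a finite nonempty index type). -/
noncomputable def PosBool.iAnd {ι Q : Type} [Finite ι] [Nonempty ι]
    (f : ι → PosBool Q) : PosBool Q :=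
  letI : Fintype ι := Fintype.ofFinite ι
  (Finset.univ.toList.map f).foldl .conj (f (Classical.arbitrary ι))

/-- Action vectors for the agents in `A` respecting the sharing constraint `ξ`. -/
abbrev ShrVec (A : Set Agt) (ξ : Set (Agt × Agt)) (Act : Type) : Type :=
  {a : ↥A → Act // ∀ i j : ↥A, ((i : Agt), (j : Agt)) ∈ ξ → a i = a j}

instance {A : Set Agt} {ξ : Set (Agt × Agt)} [Nonempty Act] :
    Nonempty (ShrVec A ξ Act) :=
  ⟨⟨fun _ => Classical.arbitrary Act, fun _ _ _ => rfl⟩⟩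

/-- Combine an action vector for `A` with one for `Aᶜ`: `a ⊕ a'`. -/
noncomputable def combineVec (A : Set Agt) (a : ↥A → Act) (a' : ↥(Aᶜ) → Act) :
    Agt → Act := fun i =>
  if h : i ∈ A then a ⟨i, h⟩ else a' ⟨i, h⟩

/-- `l[π ↦ s]`: extend a letter `l : V → S` to a letter over `V ∪ {π}`. -/
noncomputable def extendLetter {V : Set Var} (π : Var) (l : ↥V → S) (s : S) :
    ↥(insert π V) → S := fun v =>
  if h : (v : Var) = π then s
  else l ⟨v, (Set.mem_insert_iff.mp v.2).resolve_left h⟩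

/-- The product construction for the existential quantifier `⟪A⟫_ξ π`. -/
noncomputable def productEx {Q : Type} [Finite Agt] [Finite Act] [Nonempty Act]
    (G : CGS Agt AP S Act) (sDot : S) (A : Set Agt) (ξ : Set (Agt × Agt))
    (V : Set Var) (π : Var) (D : DPA Q (↥(insert π V) → S)) :
    APA (Q × S) (↥V → S) where
  init := (D.init, sDot)
  δ := fun qs l =>
    PosBool.iOr fun a : ShrVec A ξ Act =>
      PosBool.iAnd fun a' : ShrVec (Aᶜ) ξ Act =>
        PosBool.var (D.δ qs.1 (extendLetter π l qs.2),
          G.trans qs.2 (combineVec A a.1 a'.1))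
  color := fun qs => D.color qs.1

/-- The product construction for the universal quantifier `⟦A⟧_ξ π`. -/
noncomputable def productAll {Q : Type} [Finite Agt] [Finite Act] [Nonempty Act]
    (G : CGS Agt AP S Act) (sDot : S) (A : Set Agt) (ξ : Set (Agt × Agt))
    (V : Set Var) (π : Var) (D : DPA Q (↥(insert π V) → S)) :
    APA (Q × S) (↥V → S) where
  init := (D.init, sDot)
  δ := fun qs l =>
    PosBool.iAnd fun a : ShrVec A ξ Act =>
      PosBool.iOr fun a' : ShrVec (Aᶜ) ξ Act =>
        PosBool.var (D.δ qs.1 (extendLetter π l qs.2),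
          G.trans qs.2 (combineVec A a.1 a'.1))
  color := fun qs => D.color qs.1
/-! ### Concrete alphabets, automata and the running-example CGS -/

/-- The alphabet `Σ = {a, b, c}`. -/
inductive ABC : Type where
  | a | b | c
deriving DecidableEq

/-- States `{q0, q1, q2, q3}` of the example APA. -/
inductive QABC : Type where
  | q0 | q1 | q2 | q3
deriving DecidableEq

/-- The example APA of Example 3: `δ(q0, l) = q0 ∧ (q1 ∨ q2)` for every letter,
`q1` waits for an `a`, `q2` waits for a `b`, and `q3` is an accepting sink. -/
def exampleAPA : APA QABC ABC where
  init := .q0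
  δ := fun q l =>
    match q, l with
    | .q0, _ => .conj (.var .q0) (.disj (.var .q1) (.var .q2))
    | .q1, .a => .var .q3
    | .q1, _ => .var .q1
    | .q2, .b => .var .q3
    | .q2, _ => .var .q2
    | .q3, _ => .var .q3
  color := fun q =>
    match q with
    | .q0 => 0
    | .q1 => 1
    | .q2 => 1
    | .q3 => 0

/-- States `{q1, q3}` of the sub-automaton `A₁`. -/
inductive QA1 : Type where
  | q1 | q3
deriving DecidableEq

/-- The APA `A₁`: from `q1` move to the accepting sink `q3` on letter `a`. -/
def exampleAPA1 : APA QA1 ABC where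
  init := .q1
  δ := fun q l =>
    match q, l with
    | .q1, .a => .var .q3
    | .q1, _ => .var .q1
    | .q3, _ => .var .q3
  color := fun q =>
    match q with
    | .q1 => 1
    | .q3 => 0

/-- The two path variables `π` and `π'`. -/
inductive PVar : Type where
  | pi | pi'
deriving DecidableEq

/-- The states `{s0, s1, s2}` of the running-example CGS. -/
inductive St : Type where
  | s0 | s1 | s2
deriving DecidableEq

/-- The agents `{sched, W1, W2}` of the running-example CGS. -/
inductive Ag : Type where
  | sched | w1 | w2
deriving DecidableEq

/-- The actions: `g`/`ng` for the scheduler and `r`/`nr` for the workers. -/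
inductive ActEx : Type where
  | g | ng | r | nr
deriving DecidableEq

/-- The running-example CGS: granted requests of both workers lead directly to the
working state `s2`; a granted single request passes through `s1`. -/
def exampleCGS : CGS Ag Unit St ActEx where
  init := .s0
  trans := fun s a =>
    match s with
    | .s0 =>
      if a .sched = .g then
        if a .w1 = .r ∧ a .w2 = .r then .s2
        else if a .w1 = .r ∨ a .w2 = .r then .s1
        else .s0
      else .s0
    | .s1 => .s2
    | .s2 => .s0
  label := fun s =>
    match s with
    | .s2 => {()}
    | _ => (∅ : Set Unit)

/-- The path formula `(¬ w_{π'}) U (¬ w_{π'} ∧ w_π)`, where `w` is the unique atomic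
proposition `()`. -/
def exampleBody : HPath Ag Unit PVar :=
  .untl (.neg (.atom () .pi')) (.conj (.neg (.atom () .pi')) (.atom () .pi))

/-- The state formula `⟦{sched, W1}⟧_∅ π'. (¬ w_{π'}) U (¬ w_{π'} ∧ w_π)`. -/
def exampleInner : HState Ag Unit PVar :=
  .all {Ag.sched, Ag.w1} ∅ .pi' (.path exampleBody)

/-- The state formula
`⟪{sched, W1, W2}⟫_∅ π. ⟦{sched, W1}⟧_∅ π'. (¬ w_{π'}) U (¬ w_{π'} ∧ w_π)`. -/
def exampleFormula : HState Ag Unit PVar :=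
  .ex {Ag.sched, Ag.w1, Ag.w2} ∅ .pi exampleInner

/-- States `{q0, q1, q2}` of the example DPA. -/
inductive QD : Type where
  | q0 | q1 | q2
deriving DecidableEq

/-- The example DPA over the alphabet `{π, π'} → {s0, s1, s2}`. -/
def exampleDPA : DPA QD (PVar → St) where
  init := .q0
  δ := fun q l =>
    match q with
    | .q0 => if l .pi' = .s2 then .q2 else if l .pi = .s2 then .q1 else .q0
    | .q1 => .q1
    | .q2 => .q2
  color := fun q =>
    match q with
    | .q0 => 1
    | .q1 => 0
    | .q2 => 1

section PosBool

variable {ι Q : Type} (X : Set Q)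

lemma PosBool.sat_foldl_disj (l : List (PosBool Q)) (θ : PosBool Q) :
    PosBool.Sat X (l.foldl .disj θ) ↔ PosBool.Sat X θ ∨ ∃ θ' ∈ l, PosBool.Sat X θ' := by
  induction l generalizing θ with
  | nil => simp
  | cons θ' l ih => simp only [List.foldl_cons, ih, PosBool.Sat, List.exists_mem_cons_iff]; tauto

lemma PosBool.sat_foldl_conj (l : List (PosBool Q)) (θ : PosBool Q) :
    PosBool.Sat X (l.foldl .conj θ) ↔ PosBool.Sat X θ ∧ ∀ θ' ∈ l, PosBool.Sat X θ' := by
  induction l generalizing θ with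
  | nil => simp
  | cons θ' l ih => simp only [List.foldl_cons, ih, PosBool.Sat, List.forall_mem_cons]; tauto

variable [Finite ι] [Nonempty ι]

lemma PosBool.sat_iOr (f : ι → PosBool Q) :
    PosBool.Sat X (PosBool.iOr f) ↔ ∃ i, PosBool.Sat X (f i) := by
  let _ : Fintype ι := Fintype.ofFinite ι
  simp only [iOr, sat_foldl_disj, List.mem_map, Finset.mem_toList, Finset.mem_univ, true_and,
    exists_exists_eq_and, or_iff_right_iff_imp]
  exact fun h => ⟨_, h⟩

lemma PosBool.sat_iAnd (f : ι → PosBool Q) :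
    PosBool.Sat X (PosBool.iAnd f) ↔ ∀ i, PosBool.Sat X (f i) := by
  let _ : Fintype ι := Fintype.ofFinite ι
  simp only [iAnd, sat_foldl_conj, List.mem_map, Finset.mem_toList, Finset.mem_univ, true_and,
    forall_exists_index, forall_apply_eq_imp_iff, and_iff_right_iff_imp]
  exact fun h => h _

end PosBool

section Play

variable {Agt AP S Act : Type} (G : CGS Agt AP S Act) (s : S)

lemma CGS.hist_length (F : Agt → Strategy S Act) (k : ℕ) : (G.hist s F k).1.length = k + 1 := by
  induction k with
  | zero => simp [CGS.hist]
  | succ k ih => simp [CGS.hist, ih]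

lemma CGS.play_succ (F : Agt → Strategy S Act) (k : ℕ) :
    G.play s F (k + 1) = G.trans (G.play s F k) fun i => F i (G.hist s F k) := by
  simp [CGS.play, CGS.hist]

lemma CGS.hist_succ (F : Agt → Strategy S Act) (k : ℕ) :
    (G.hist s F (k + 1)).1 = (G.hist s F k).1 ++ [G.play s F (k + 1)] := by
  rw [play_succ]
  rfl

lemma CGS.hist_tail_succ (F : Agt → Strategy S Act) (k : ℕ) :
    (G.hist s F (k + 1)).1.tail = (G.hist s F k).1.tail ++ [G.play s F (k + 1)] := by
  rw [hist_succ, List.tail_append_of_ne_nil (G.hist s F k).2]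

lemma CGS.hist_congr {F F' : Agt → Strategy S Act} {k : ℕ}
    (hF : ∀ h : NEList S, h.1.length ≤ k → ∀ i, F i h = F' i h) :
    G.hist s F k = G.hist s F' k := by
  induction k with
  | zero => rfl
  | succ k ih =>
    have hk : G.hist s F k = G.hist s F' k := ih fun h hh => hF h (by omega)
    have hact : (fun i => F i (G.hist s F' k)) = fun i => F' i (G.hist s F' k) :=
      funext (hF _ (by rw [hist_length]))
    have hp : G.play s F k = G.play s F' k := congrArg (fun h : NEList S => h.1.getLast h.2) hk
    apply Subtype.ext
    rw [hist_succ, hist_succ, play_succ, play_succ, hp, hk, hact]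

lemma CGS.play_congr {F F' : Agt → Strategy S Act} {k : ℕ}
    (hF : ∀ h : NEList S, h.1.length ≤ k → ∀ i, F i h = F' i h) :
    G.play s F k = G.play s F' k :=
  congrArg (fun h : NEList S => h.1.getLast h.2) (G.hist_congr s hF)

lemma combine_apply_eq_combineVec (A : Set Agt) (F : ↥A → Strategy S Act)
    (F' : ↥(Aᶜ) → Strategy S Act) (h : NEList S) :
    (fun i => combine A F F' i h) = combineVec A (fun i => F i h) fun i => F' i h := by
  funext i
  unfold combine combineVec
  split_ifs <;> rfl

def seqStrategy {B : Type} (α : ℕ → B → Act) : B → Strategy S Act :=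
  fun i h => α (h.1.length - 1) i

lemma seqStrategy_mem_shr {B : Set Agt} {ξ : Set (Agt × Agt)} (α : ℕ → ShrVec B ξ Act) :
    seqStrategy (S := S) (fun k => (α k).1) ∈ shr B ξ :=
  fun i j hij => funext fun _ => (α _).2 i j hij

lemma combine_seqStrategy_congr (A : Set Agt) (F : ↥A → Strategy S Act)
    {α β : ℕ → ↥(Aᶜ) → Act} {k : ℕ} (hαβ : ∀ j < k, α j = β j) (h : NEList S)
    (hh : h.1.length ≤ k) (i : Agt) :
    combine A F (seqStrategy α) i h = combine A F (seqStrategy β) i h := by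
  have := List.length_pos_of_ne_nil h.2
  unfold combine seqStrategy
  split_ifs
  · rfl
  · exact congrFun (hαβ _ (by omega)) _

end Play

section RunTree

lemma branchNode_succ (b : ℕ → ℕ) (k : ℕ) : branchNode b (k + 1) = branchNode b k ++ [b k] := by
  simp [branchNode, List.range_succ]

lemma branchNode_length (b : ℕ → ℕ) (k : ℕ) : (branchNode b k).length = k := by
  simp [branchNode]

lemma branchNode_getD (b : ℕ → ℕ) {j k : ℕ} (hj : j < k) (d : ℕ) :
    (branchNode b k).getD j d = b j := by
  simp [branchNode, hj]

lemma exists_branchNode (P : List ℕ → Prop) (hroot : P [])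
    (hchild : ∀ τ, P τ → ∃ n, P (τ ++ [n])) : ∃ b : ℕ → ℕ, ∀ k, P (branchNode b k) := by
  choose next hnext using fun τ => (em (P τ)).elim (fun h => (hchild τ h).imp fun _ h' _ => h')
    fun h => ⟨0, fun h' => absurd h' h⟩
  let node : ℕ → List ℕ := fun k => Nat.rec [] (fun _ τ => τ ++ [next τ]) k
  have hnode : ∀ k, branchNode (fun k => next (node k)) k = node k ∧ P (node k) := by
    intro k
    induction k with
    | zero => exact ⟨rfl, hroot⟩
    | succ k ih => exact ⟨by rw [branchNode_succ, ih.1], hnext _ ih.2⟩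
  exact ⟨_, fun k => (hnode k).1 ▸ (hnode k).2⟩

variable {Q Alph β : Type} {M : APA Q Alph} {u : ℕ → Alph} (rt : RunTree M u)

noncomputable def RunTree.descend (target : List ℕ → β → Q) (τ : List ℕ) (x : β) : List ℕ :=
  if h : ∃ n, τ ++ [n] ∈ rt.T ∧ rt.label (τ ++ [n]) = target τ x then τ ++ [h.choose] else τ

lemma RunTree.exists_descend_eq {target : List ℕ → β → Q} {τ : List ℕ} {x : β}
    (h : ∃ n, τ ++ [n] ∈ rt.T ∧ rt.label (τ ++ [n]) = target τ x) :
    ∃ n, rt.descend target τ x = τ ++ [n] ∧ τ ++ [n] ∈ rt.T ∧ rt.label (τ ++ [n]) = target τ x :=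
  ⟨h.choose, dif_pos h, h.choose_spec⟩

end RunTree

section DPA

variable {Q Alph : Type} (D : DPA Q Alph)

lemma DPA.run_congr {u v : ℕ → Alph} {k : ℕ} (h : ∀ j < k, u j = v j) : D.run u k = D.run v k := by
  induction k with
  | zero => rfl
  | succ k ih => simp only [DPA.run, ih fun j hj => h j (by omega), h k k.lt_succ_self]

lemma DPA.mem_toAPA_lang_iff (u : ℕ → Alph) : u ∈ D.toAPA.Lang ↔ u ∈ D.Lang := by
  constructor
  · rintro ⟨rt, hacc⟩
    obtain ⟨b, hb⟩ := exists_branchNode (fun τ => τ ∈ rt.T ∧ rt.label τ = D.run u τ.length)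
      ⟨rt.root_mem, rt.root_label⟩ fun τ ⟨hτ, hlabel⟩ => by
        obtain ⟨n, hn, hlabel'⟩ := rt.consistent τ hτ
        refine ⟨n, hn, ?_⟩
        rw [hlabel', hlabel, List.length_append, List.length_singleton]
        rfl
    have := hacc b fun k => (hb k).1
    simpa only [DPA.Lang, Set.mem_ofPred_eq, DPA.toAPA, (hb _).2, branchNode_length] using this
  · intro hu
    refine ⟨⟨Set.univ, fun τ => D.run u τ.length, trivial, rfl, fun τ _ => ⟨0, trivial, ?_⟩⟩, ?_⟩
    · simp only [List.length_append, List.length_singleton]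
      rfl
    · intro b _
      simpa only [DPA.Lang, Set.mem_ofPred_eq, DPA.toAPA, branchNode_length] using hu

end DPA

section Product

variable {Agt AP S Act Var Q : Type} {V : Set Var} (π : Var) (D : DPA Q (↥(insert π V) → S))
  (Pa : ↥V → ℕ → S)

/-- `Π[π ↦ p]`, as a total assignment on `insert π V`. -/
noncomputable def extendAssign (p : ℕ → S) : ↥(insert π V) → ℕ → S :=
  fun v k => extendLetter π (zipAssign Pa k) (p k) v

lemma zipAssign_extendAssign (p : ℕ → S) (k : ℕ) :
    zipAssign (extendAssign π Pa p) k = extendLetter π (zipAssign Pa k) (p k) :=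
  rfl

lemma toAssign_extendAssign (p : ℕ → S) :
    toAssign (insert π V) (extendAssign π Pa p) = Function.update (toAssign V Pa) π (some p) := by
  funext v
  by_cases hv : v = π
  · subst hv
    simp only [toAssign, Set.mem_insert, dif_pos, Function.update_self, Option.some.injEq]
    funext k
    simp [extendAssign, extendLetter]
  · by_cases hV : v ∈ V
    · simp only [toAssign, Set.mem_insert_of_mem π hV, hV, dif_pos, Function.update_of_ne hv,
        Option.some.injEq]
      funext k
      simp [extendAssign, extendLetter, zipAssign, hv]
    · simp [toAssign, hv, hV]

/-- The label `(q, s)` of the product automaton at depth `k` along the play `p`. -/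
noncomputable def productLabel (p : ℕ → S) (k : ℕ) : Q × S :=
  (D.run (zipAssign (extendAssign π Pa p)) k, p k)

lemma productLabel_succ (p : ℕ → S) (k : ℕ) :
    productLabel π D Pa p (k + 1) =
      (D.δ (productLabel π D Pa p k).1 (extendLetter π (zipAssign Pa k) (p k)), p (k + 1)) :=
  rfl

lemma productLabel_congr {p p' : ℕ → S} {k : ℕ} (h : ∀ j ≤ k, p j = p' j) :
    productLabel π D Pa p k = productLabel π D Pa p' k := by
  simp only [productLabel, h k le_rfl]
  congr 1
  exact D.run_congr fun j hj => by rw [zipAssign_extendAssign, zipAssign_extendAssign, h j hj.le]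

variable {Pa} [Finite Agt] [Finite Act] [Nonempty Act] {G : CGS Agt AP S Act} {sDot : S}
  {A : Set Agt} {ξ : Set (Agt × Agt)} {π D}

lemma sat_productEx_δ (X : Set (Q × S)) (x : Q × S) (l : ↥V → S) :
    PosBool.Sat X ((productEx G sDot A ξ V π D).δ x l) ↔
      ∃ a : ShrVec A ξ Act, ∀ a' : ShrVec (Aᶜ) ξ Act,
        (D.δ x.1 (extendLetter π l x.2), G.trans x.2 (combineVec A a.1 a'.1)) ∈ X := by
  simp only [productEx, PosBool.sat_iOr, PosBool.sat_iAnd, PosBool.Sat]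

/-- The coalition follows the run tree: a history is mapped to the node reached by descending,
state by state, to a child labelled by that state, and the coalition plays the action vector
that witnesses the disjunction of the transition formula at this node. -/
theorem exists_winning_of_mem_lang_productEx
    (hPa : zipAssign Pa ∈ (productEx G sDot A ξ V π D).Lang) :
    ∃ F ∈ shr A ξ, ∀ F' ∈ shr (Aᶜ) ξ,
      zipAssign (extendAssign π Pa (G.play sDot (combine A F F'))) ∈ D.Lang := by
  obtain ⟨rt, hacc⟩ := hPa
  let target : List ℕ → S → Q × S := fun τ s' =>
    (D.δ (rt.label τ).1 (extendLetter π (zipAssign Pa τ.length) (rt.label τ).2), s')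
  have hmove : ∀ τ, ∃ a : ShrVec A ξ Act, τ ∈ rt.T → ∀ a' : ShrVec (Aᶜ) ξ Act, ∃ n,
      τ ++ [n] ∈ rt.T ∧
        rt.label (τ ++ [n]) = target τ (G.trans (rt.label τ).2 (combineVec A a.1 a'.1)) := by
    intro τ
    by_cases hτ : τ ∈ rt.T
    · obtain ⟨a, ha⟩ := (sat_productEx_δ _ _ _).1 (rt.consistent τ hτ)
      exact ⟨a, fun _ => ha⟩
    · exact ⟨Classical.arbitrary _, fun h => absurd h hτ⟩
  choose move hmove using hmove
  let node : NEList S → List ℕ := fun h => h.1.tail.foldl (rt.descend target) []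
  refine ⟨fun i h => (move (node h)).1 i, fun i j hij => funext fun h => (move _).2 i j hij, ?_⟩
  intro F' hF'
  set C := combine A (fun i h => (move (node h)).1 i) F' with hC
  set p := G.play sDot C with hp
  let P : List ℕ → Prop := fun τ => τ = node (G.hist sDot C τ.length) ∧ τ ∈ rt.T ∧
    rt.label τ = productLabel π D Pa p τ.length
  have hchild : ∀ τ, P τ → ∃ n, P (τ ++ [n]) := by
    rintro τ ⟨hnode, hτ, hlabel⟩
    have hplay : p (τ.length + 1) = G.trans (rt.label τ).2
        (combineVec A (move τ).1 fun i => F' i (G.hist sDot C τ.length)) := by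
      rw [hlabel, hp, G.play_succ, hC, combine_apply_eq_combineVec, ← hnode]
      rfl
    obtain ⟨n, hdescend, hn, hlabel'⟩ := rt.exists_descend_eq
      (hplay ▸ hmove τ hτ ⟨_, fun i j hij => congrFun (hF' i j hij) _⟩)
    refine ⟨n, ?_, hn, ?_⟩
    · simp only [List.length_append, List.length_singleton, node, G.hist_tail_succ,
        List.foldl_append, List.foldl_cons, List.foldl_nil]
      exact hdescend.symm.trans (congrArg (rt.descend target · _) hnode)
    · rw [hlabel', List.length_append, List.length_singleton]
      simp only [target, hlabel]
      rfl
  obtain ⟨b, hb⟩ := exists_branchNode P ⟨rfl, rt.root_mem, rt.root_label⟩ hchild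
  simpa only [DPA.Lang, Set.mem_ofPred_eq, productEx, (hb _).2.2, branchNode_length,
    productLabel] using hacc b fun k => (hb k).2.1

/-- The node `τ` stands for the opponents playing `dec τ[k]` at step `k` and carries the product
label of the resulting play at depth `|τ|`. The plays of a node and of its children agree up to
depth `|τ|`, so these labels are consistent, and along a branch they are the labels of a single
play. -/
theorem mem_lang_productEx_of_winning {F : ↥A → Strategy S Act}
    (hF : F ∈ shr A ξ)
    (hwin : ∀ F' ∈ shr (Aᶜ) ξ,
      zipAssign (extendAssign π Pa (G.play sDot (combine A F F'))) ∈ D.Lang) :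
    zipAssign Pa ∈ (productEx G sDot A ξ V π D).Lang := by
  obtain ⟨dec, hdec⟩ := exists_surjective_nat (ShrVec (Aᶜ) ξ Act)
  let C : (ℕ → ↥(Aᶜ) → Act) → Agt → Strategy S Act := fun α => combine A F (seqStrategy α)
  let replies : List ℕ → ℕ → ↥(Aᶜ) → Act := fun τ j => (dec (τ.getD j 0)).1
  have hplay : ∀ {α β : ℕ → ↥(Aᶜ) → Act} {k : ℕ}, (∀ j < k, α j = β j) →
      ∀ j ≤ k, G.play sDot (C α) j = G.play sDot (C β) j := fun hαβ j hj =>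
    G.play_congr sDot (combine_seqStrategy_congr A F fun i hi => hαβ i (by omega))
  refine ⟨⟨Set.univ, fun τ => productLabel π D Pa (G.play sDot (C (replies τ))) τ.length,
    trivial, rfl, fun τ _ => ?_⟩, fun b _ => ?_⟩
  · rw [sat_productEx_δ]
    refine ⟨⟨fun i => F i (G.hist sDot (C (replies τ)) τ.length),
      fun i j hij => congrFun (hF i j hij) _⟩, fun a' => ?_⟩
    obtain ⟨n, rfl⟩ := hdec a'
    refine ⟨n, trivial, ?_⟩
    have hreplies : ∀ j < τ.length, replies (τ ++ [n]) j = replies τ j := fun j hj => by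
      simp only [replies, List.getD_append _ _ _ _ hj]
    have hhist :
        G.hist sDot (C (replies (τ ++ [n]))) τ.length = G.hist sDot (C (replies τ)) τ.length :=
      G.hist_congr sDot (combine_seqStrategy_congr A F hreplies)
    rw [List.length_append, List.length_singleton, productLabel_succ,
      productLabel_congr π D Pa (hplay hreplies), G.play_succ, combine_apply_eq_combineVec, hhist,
      hplay hreplies _ le_rfl]
    simp only [seqStrategy, G.hist_length, Nat.add_sub_cancel, replies,
      List.getD_append_right _ _ _ _ le_rfl, Nat.sub_self, List.getD_cons_zero]
    rfl
  · have hlabel : ∀ k, productLabel π D Pa (G.play sDot (C (replies (branchNode b k))))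
        (branchNode b k).length =
          productLabel π D Pa (G.play sDot (C fun j => (dec (b j)).1)) k := by
      intro k
      rw [branchNode_length]
      exact productLabel_congr π D Pa
        (hplay fun j hj => by simp only [replies, branchNode_getD b hj])
    simp only [productEx, hlabel]
    exact hwin _ (seqStrategy_mem_shr fun j => dec (b j))

end Product

theorem product_equiv_ex
    {Agt AP S Act Var Q : Type} [Finite Agt] [Finite S] [Finite Act] [Nonempty Act] [Finite Q]
    (G : CGS Agt AP S Act) (sDot : S) (V : Set Var) (π : Var) (hπ : π ∉ V)
    (φ' : HState Agt AP Var) (hfree : HState.freeS φ' = insert π V)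
    (A : Set Agt) (ξ : Set (Agt × Agt)) (hξ : ξ ⊆ (A ×ˢ A) ∪ ((Aᶜ) ×ˢ (Aᶜ)))
    (D : DPA Q (↥(insert π V) → S))
    (hD : APAEquiv G sDot (insert π V) D.toAPA φ') :
    APAEquiv G sDot V (productEx G sDot A ξ V π D) (HState.ex A ξ π φ') := by
  intro Pa
  have hsat : ∀ p, zipAssign (extendAssign π Pa p) ∈ D.Lang ↔
      HState.sat G sDot (Function.update (toAssign V Pa) π (some p)) φ' := fun p => by
    rw [← D.mem_toAPA_lang_iff, hD, toAssign_extendAssign]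
  simp only [HState.sat, ← hsat]
  exact ⟨exists_winning_of_mem_lang_productEx,
    fun ⟨_, hF, hwin⟩ => mem_lang_productEx_of_winning hF hwin⟩

end HyperATLS
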